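/- Suppose n = 3 and let (i,j,k) be a permutation of (1,2,3). Then the elements Cᵢ and C_{ij} satisfy the generalized Bannai-Ito relation {C_{ij}, C_{jk}} = C_{ik} + {Cⱼ, Γ} + {Cᵢ, C_k}, where Γ = C_{123} = ½([A₋, A₊] − 1)P. -/

import Mathlib

/-- Product of pairwise-commuting elements `P s₁ ⋯ P s_k` over a finite index subset `S`. -/
def PS {R : Type*} [Monoid R] {n : ℕ} (P : Fin n → R)
    (hP : ∀ i j : Fin n, Commute (P i) (P j)) (S : Finset (Fin n)) : R :=
  S.noncommProd P fun i _ j _ _ => hP i j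

/-- The centralizing element `C_X = ¼{A₋, [A₊, X]} − ½X` built from an involution `X`. -/
noncomputable def Cgen {R : Type*} [Ring R] [Algebra ℂ R] (Am Ap X : R) : R :=
  (4 : ℂ)⁻¹ • (Am * (Ap * X - X * Ap) + (Ap * X - X * Ap) * Am) - (2 : ℂ)⁻¹ • X

/-!
Split `A₊` into the parts `A₊ - Pₜ A₊ Pₜ` (twice the `Pₜ`-odd part of `A₊`), and likewise `A₋`.
The part at site `t` anticommutes with `Pₜ` and commutes with the other `Pₛ`, because
`[Pₛ, [Pₜ, A₊]] = 0`. Conjugation by `P = P₁P₂P₃` is the composite of the three conjugations by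
the `Pₜ`, and it negates `A₊`; hence the parts add up to `2A₊`. Since `Pₜ` commutes with `A₊²`
and with `{A₊, A₋} = 2A₀`, the square of each part is its anticommutator with `A₊`; inserting
the sum decomposition, the anticommutators of parts at distinct sites satisfy three linear
relations whose only solution is zero. The relation between the `C`'s and `Γ` then becomes a
polynomial identity in the parts and the `Pₜ` under these (anti)commutation rules, checked by
rewriting both sides to a normal form.
-/

open Finset

section Involution

variable {R : Type*} [Ring R] {p q a b : R}

/-- Twice the `p`-odd part of `a`. -/
def oddPart (p a : R) : R := a - p * a * p

theorem oddPart_eq_commutator_mul (hp : p * p = 1) : oddPart p a = (a * p - p * a) * p := by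
  rw [oddPart, sub_mul, mul_assoc a, hp, mul_one]

theorem mul_oddPart_self (hp : p * p = 1) : p * oddPart p a = -(oddPart p a * p) := by
  rw [oddPart_eq_commutator_mul hp]
  linear_combination (norm := noncomm_ring) p * a * hp - hp * (a * p) + (a * p - p * a) * hp

theorem commute_oddPart (hp : p * p = 1) (hqp : Commute q p) (hq : Commute q (p * a - a * p)) :
    Commute q (oddPart p a) := by
  rw [oddPart_eq_commutator_mul hp, ← neg_sub]
  exact hq.neg_right.mul_right hqp

theorem conj_eq_of_commute (hq : q * q = 1) (h : Commute q b) : q * b * q = b := by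
  rw [h.eq, mul_assoc, hq, mul_one]

theorem oddPart_anticomm (hp : p * p = 1) (h : Commute p (a * b + b * a)) :
    oddPart p a * oddPart p b + oddPart p b * oddPart p a
      = a * oddPart p b + oddPart p b * a + (oddPart p a * b + b * oddPart p a) := by
  have h' := h.eq
  simp only [oddPart]
  linear_combination (norm := noncomm_ring) h' * p + (a * b + b * a) * hp
    + p * a * hp * (b * p) + p * b * hp * (a * p)

end Involution

section ProductOfInvolutions

variable {R : Type*} {n : ℕ}

section Monoid

variable [Monoid R] {P : Fin n → R} (hP : ∀ i j, Commute (P i) (P j))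

theorem PS_empty : PS P hP ∅ = 1 :=
  noncommProd_empty _ _

theorem PS_singleton (s : Fin n) : PS P hP {s} = P s :=
  noncommProd_singleton _ _

theorem PS_insert {s : Fin n} {S : Finset (Fin n)} (hs : s ∉ S) :
    PS P hP (insert s S) = P s * PS P hP S :=
  noncommProd_insert_of_notMem _ _ _ _ hs

theorem commute_PS (s : Fin n) (S : Finset (Fin n)) : Commute (P s) (PS P hP S) :=
  noncommProd_commute _ _ _ _ fun t _ => hP s t

theorem PS_mul_self (hP2 : ∀ i, P i * P i = 1) (S : Finset (Fin n)) :
    PS P hP S * PS P hP S = 1 := by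
  induction S using Finset.induction_on with
  | empty => simp [PS_empty]
  | insert s S hs ih =>
    rw [PS_insert hP hs, mul_assoc, ← mul_assoc (PS P hP S), ← (commute_PS hP s S).eq,
      mul_assoc, ih, mul_one, hP2]

end Monoid

theorem PS_univ_eq_of_ne [Monoid R] {P : Fin 3 → R} (hP : ∀ i j, Commute (P i) (P j))
    {i j k : Fin 3} (hij : i ≠ j) (hjk : j ≠ k) (hik : i ≠ k) :
    PS P hP univ = P i * P j * P k := by
  have huniv : (univ : Finset (Fin 3)) = {i, j, k} := by
    revert i j k
    decide
  rw [huniv, PS_insert hP (by simp [hij, hik]), PS_insert hP (by simp [hjk]), PS_singleton,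
    mul_assoc]

variable [Ring R] {P : Fin n → R} (hP : ∀ i j, Commute (P i) (P j)) (hP2 : ∀ i, P i * P i = 1)
  {a : R}
include hP2

theorem PS_mul_mul_PS (hodd : ∀ s t, s ≠ t → Commute (P s) (oddPart (P t) a))
    (S : Finset (Fin n)) : PS P hP S * a * PS P hP S = a - ∑ t ∈ S, oddPart (P t) a := by
  induction S using Finset.induction_on with
  | empty => simp [PS_empty]
  | insert s S hs ih =>
    have hconj : ∀ t ∈ S, P s * oddPart (P t) a * P s = oddPart (P t) a := fun t ht =>
      conj_eq_of_commute (hP2 s) (hodd s t (ne_of_mem_of_not_mem ht hs).symm)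
    calc PS P hP (insert s S) * a * PS P hP (insert s S)
        = P s * (PS P hP S * a * PS P hP S) * P s := by
          rw [PS_insert hP hs]; simp only [mul_assoc]; rw [(commute_PS hP s S).eq]
      _ = a - ∑ t ∈ insert s S, oddPart (P t) a := by
          rw [ih, mul_sub, sub_mul, mul_sum, sum_mul, sum_congr rfl hconj, sum_insert hs, oddPart]
          abel

theorem sum_oddPart_eq_of_anticomm (hodd : ∀ s t, s ≠ t → Commute (P s) (oddPart (P t) a))
    (ha : PS P hP univ * a + a * PS P hP univ = 0) : ∑ t, oddPart (P t) a = a + a := by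
  have hconj := PS_mul_mul_PS hP hP2 hodd univ
  rw [eq_neg_of_add_eq_zero_left ha, neg_mul, mul_assoc, PS_mul_self hP hP2, mul_one] at hconj
  linear_combination (norm := abel) hconj

end ProductOfInvolutions

theorem eq_zero_of_symm_of_sum_eq_diag {M : Type*} [AddCommGroup M] [IsAddTorsionFree M]
    {F : Fin 3 → Fin 3 → M} (hsymm : ∀ s t, F s t = F t s) (hsum : ∀ s, ∑ t, F s t = F s s)
    {s t : Fin 3} (hst : s ≠ t) : F s t = 0 := by
  have h0 := hsum 0
  have h1 := hsum 1
  have h2 := hsum 2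
  simp only [Fin.sum_univ_three] at h0 h1 h2
  have := hsymm 1 0
  have := hsymm 2 0
  have := hsymm 2 1
  -- for `{s, t, r} = {0, 1, 2}`, the rows `s` and `t` minus the row `r` give `2 • F s t = 0`
  fin_cases s <;> fin_cases t <;> grind

section ThreeSites

variable {R : Type*} [Ring R] [IsAddTorsionFree R] {P : Fin 3 → R} {a b : R}

theorem oddPart_anticomm_of_ne (hP2 : ∀ i, P i * P i = 1)
    (ha : ∑ t, oddPart (P t) a = a + a) (hb : ∑ t, oddPart (P t) b = b + b)
    (hab : ∀ t, Commute (P t) (a * b + b * a)) {s t : Fin 3} (hst : s ≠ t) :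
    oddPart (P s) a * oddPart (P t) b + oddPart (P t) b * oddPart (P s) a
      + (oddPart (P t) a * oddPart (P s) b + oddPart (P s) b * oddPart (P t) a) = 0 := by
  refine eq_zero_of_symm_of_sum_eq_diag (F := fun s t => oddPart (P s) a * oddPart (P t) b
    + oddPart (P t) b * oddPart (P s) a + (oddPart (P t) a * oddPart (P s) b
      + oddPart (P s) b * oddPart (P t) a)) (fun s t => add_comm _ _) (fun s => ?_) hst
  simp only [sum_add_distrib, ← mul_sum, ← sum_mul, ha, hb, oddPart_anticomm (hP2 s) (hab s)]
  noncomm_ring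

end ThreeSites

/-- `x t`, `y t` stand for the parts of `A₊`, `A₋` at the site `t`, graded by the involution `p t`.
Parts of `A₊` and `A₋` at distinct sites are only known to anticommute in the symmetrized form
`anticomm_xy`. -/
structure IsSplitting {R ι : Type*} [Ring R] (p x y : ι → R) : Prop where
  mul_self : ∀ t, p t * p t = 1
  commute : ∀ s t, Commute (p s) (p t)
  anticomm_x_self : ∀ t, p t * x t = -(x t * p t)
  anticomm_y_self : ∀ t, p t * y t = -(y t * p t)
  commute_x : ∀ s t, s ≠ t → Commute (p s) (x t)
  commute_y : ∀ s t, s ≠ t → Commute (p s) (y t)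
  anticomm_x : ∀ s t, s ≠ t → x s * x t + x t * x s = 0
  anticomm_y : ∀ s t, s ≠ t → y s * y t + y t * y s = 0
  anticomm_xy : ∀ s t, s ≠ t → x s * y t + y t * x s + (x t * y s + y s * x t) = 0

namespace IsSplitting

variable {R ι κ : Type*} [Ring R] {p x y : ι → R}

theorem comp_injective (h : IsSplitting p x y) {f : κ → ι} (hf : Function.Injective f) :
    IsSplitting (p ∘ f) (x ∘ f) (y ∘ f) where
  mul_self t := h.mul_self (f t)
  commute s t := h.commute (f s) (f t)
  anticomm_x_self t := h.anticomm_x_self (f t)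
  anticomm_y_self t := h.anticomm_y_self (f t)
  commute_x s t hst := h.commute_x (f s) (f t) (hf.ne hst)
  commute_y s t hst := h.commute_y (f s) (f t) (hf.ne hst)
  anticomm_x s t hst := h.anticomm_x (f s) (f t) (hf.ne hst)
  anticomm_y s t hst := h.anticomm_y (f s) (f t) (hf.ne hst)
  anticomm_xy s t hst := h.anticomm_xy (f s) (f t) (hf.ne hst)

end IsSplitting

theorem isSplitting_oddPart {R : Type*} [Ring R] [IsAddTorsionFree R] {P : Fin 3 → R}
    (hP : ∀ i j, Commute (P i) (P j)) (hP2 : ∀ i, P i * P i = 1) {a b : R}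
    (ha : PS P hP univ * a + a * PS P hP univ = 0) (hb : PS P hP univ * b + b * PS P hP univ = 0)
    (haa : ∀ i, Commute (P i) (a * a)) (hbb : ∀ i, Commute (P i) (b * b))
    (hab : ∀ i, Commute (P i) (a * b + b * a))
    (hPa : ∀ i j, i ≠ j → Commute (P i) (P j * a - a * P j))
    (hPb : ∀ i j, i ≠ j → Commute (P i) (P j * b - b * P j)) :
    IsSplitting P (fun t => oddPart (P t) a) (fun t => oddPart (P t) b) := by
  have hodd_a s t (hst : s ≠ t) : Commute (P s) (oddPart (P t) a) :=
    commute_oddPart (hP2 t) (hP s t) (hPa s t hst)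
  have hodd_b s t (hst : s ≠ t) : Commute (P s) (oddPart (P t) b) :=
    commute_oddPart (hP2 t) (hP s t) (hPb s t hst)
  have hsum_a := sum_oddPart_eq_of_anticomm hP hP2 hodd_a ha
  have hsum_b := sum_oddPart_eq_of_anticomm hP hP2 hodd_b hb
  refine ⟨hP2, hP, fun t => mul_oddPart_self (hP2 t), fun t => mul_oddPart_self (hP2 t),
    hodd_a, hodd_b, fun s t hst => ?_, fun s t hst => ?_,
    fun s t hst => oddPart_anticomm_of_ne hP2 hsum_a hsum_b hab hst⟩
  -- for `a = b` the mixed relation is twice the anticommutator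
  · rw [← two_nsmul_eq_zero, two_nsmul]
    simpa [add_comm] using
      oddPart_anticomm_of_ne hP2 hsum_a hsum_a (fun t => (haa t).add_right (haa t)) hst
  · rw [← two_nsmul_eq_zero, two_nsmul]
    simpa [add_comm] using
      oddPart_anticomm_of_ne hP2 hsum_b hsum_b (fun t => (hbb t).add_right (hbb t)) hst

section ScaledRelation

variable {R : Type*} [Ring R]

/-- `16 • Cgen (B / 2) (A / 2) X`, written without division. -/
def scaledCasimir (B A X : R) : R := B * (A * X - X * A) + (A * X - X * A) * B - 8 • X

/-- `8 • Γ` for `A₋ = B / 2`, `A₊ = A / 2` and `P = X`. -/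
def scaledGamma (B A X : R) : R := (B * A - A * B) * X - 4 • X

theorem mul_mul_eq_of_mul_eq {a b c : R} (h : a * b = c) (z : R) : a * (b * z) = c * z := by
  rw [← mul_assoc, h]

set_option maxHeartbeats 4000000 in
theorem IsSplitting.scaledCasimir_relation_012 {p x y : Fin 3 → R} (h : IsSplitting p x y) :
    let A := ∑ t, x t
    let B := ∑ t, y t
    scaledCasimir B A (p 0 * p 1) * scaledCasimir B A (p 1 * p 2)
        + scaledCasimir B A (p 1 * p 2) * scaledCasimir B A (p 0 * p 1)
      = 16 • scaledCasimir B A (p 0 * p 2)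
        + 2 • (scaledCasimir B A (p 1) * scaledGamma B A (p 0 * p 1 * p 2)
          + scaledGamma B A (p 0 * p 1 * p 2) * scaledCasimir B A (p 1))
        + (scaledCasimir B A (p 0) * scaledCasimir B A (p 2)
          + scaledCasimir B A (p 2) * scaledCasimir B A (p 0)) := by
  have pq s t (_ : t < s) : p s * p t = p t * p s := (h.commute s t).eq
  have px s t (hst : s ≠ t) : p s * x t = x t * p s := (h.commute_x s t hst).eq
  have py s t (hst : s ≠ t) : p s * y t = y t * p s := (h.commute_y s t hst).eq
  have xx s t (hts : t < s) : x s * x t = -(x t * x s) :=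
    eq_neg_of_add_eq_zero_left (h.anticomm_x s t hts.ne')
  have yy s t (hts : t < s) : y s * y t = -(y t * y s) :=
    eq_neg_of_add_eq_zero_left (h.anticomm_y s t hts.ne')
  have yx s t (hts : t < s) : y s * x t = -(x s * y t) - y t * x s - x t * y s := by
    linear_combination (norm := noncomm_ring) h.anticomm_xy s t hts.ne'
  intro A B
  -- normal form: the `p`'s to the right in increasing order, the `x`'s and the `y`'s in increasing
  -- order, and `y s * x t` rewritten when `t < s`
  simp (disch := decide) only [A, B, scaledCasimir, scaledGamma, Fin.sum_univ_three, mul_add,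
    add_mul, mul_sub, sub_mul, neg_mul, mul_neg, neg_neg, mul_assoc, smul_mul_assoc, mul_smul_comm,
    smul_smul, smul_add, smul_sub, one_mul,
    fun s => mul_mul_eq_of_mul_eq (h.mul_self s),
    pq, fun s t hts => mul_mul_eq_of_mul_eq (pq s t hts),
    h.anticomm_x_self, fun t => mul_mul_eq_of_mul_eq (h.anticomm_x_self t),
    h.anticomm_y_self, fun t => mul_mul_eq_of_mul_eq (h.anticomm_y_self t),
    px, fun s t hst => mul_mul_eq_of_mul_eq (px s t hst),
    py, fun s t hst => mul_mul_eq_of_mul_eq (py s t hst),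
    fun s t hts => mul_mul_eq_of_mul_eq (xx s t hts),
    fun s t hts => mul_mul_eq_of_mul_eq (yy s t hts),
    yx, fun s t hts => mul_mul_eq_of_mul_eq (yx s t hts)]
  abel

theorem IsSplitting.scaledCasimir_relation {p x y : Fin 3 → R} (h : IsSplitting p x y)
    {A B : R} (hA : ∑ t, x t = A) (hB : ∑ t, y t = B) {i j k : Fin 3}
    (hij : i ≠ j) (hjk : j ≠ k) (hik : i ≠ k) :
    scaledCasimir B A (p i * p j) * scaledCasimir B A (p j * p k)
        + scaledCasimir B A (p j * p k) * scaledCasimir B A (p i * p j)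
      = 16 • scaledCasimir B A (p i * p k)
        + 2 • (scaledCasimir B A (p j) * scaledGamma B A (p i * p j * p k)
          + scaledGamma B A (p i * p j * p k) * scaledCasimir B A (p j))
        + (scaledCasimir B A (p i) * scaledCasimir B A (p k)
          + scaledCasimir B A (p k) * scaledCasimir B A (p i)) := by
  have hf : Function.Injective ![i, j, k] := by
    intro a b
    fin_cases a <;> fin_cases b <;> simp [hij, hjk, hik, hij.symm, hjk.symm, hik.symm]
  have hsum (z : Fin 3 → R) : ∑ t, z (![i, j, k] t) = ∑ t, z t :=
    Fintype.sum_bijective _ hf.bijective_of_finite _ _ fun _ => rfl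
  simpa [hsum, hA, hB] using (h.comp_injective hf).scaledCasimir_relation_012

end ScaledRelation

section ComplexAlgebra

variable {R : Type*} [Ring R] [Algebra ℂ R]

theorem Cgen_eq_smul_scaledCasimir (Am Ap X : R) :
    Cgen Am Ap X = (16 : ℂ)⁻¹ • scaledCasimir (Am + Am) (Ap + Ap) X := by
  simp only [Cgen, scaledCasimir, mul_add, add_mul, mul_sub, sub_mul]
  module

theorem smul_mul_eq_smul_scaledGamma (Am Ap X : R) :
    (2 : ℂ)⁻¹ • ((Am * Ap - Ap * Am - 1) * X) = (8 : ℂ)⁻¹ • scaledGamma (Am + Am) (Ap + Ap) X := by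
  simp only [scaledGamma, mul_add, add_mul, sub_mul, one_mul]
  module

end ComplexAlgebra

theorem stmt10_general
    {R : Type*} [Ring R] [Algebra ℂ R] 
    (A₀ Ap Am Pb : R) (P : Fin 3 → R)
    (hPcomm : ∀ i j : Fin 3, Commute (P i) (P j))
    (hPb : Pb = PS P hPcomm Finset.univ)
    (hPAp : Pb * Ap + Ap * Pb = 0)
    (hPAm : Pb * Am + Am * Pb = 0)
    (hpm : Ap * Am + Am * Ap = 2 * A₀)
    (hPi2 : ∀ i, P i * P i = 1)
    (hPiA0 : ∀ i, P i * A₀ = A₀ * P i)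
    (hPiBp : ∀ i, P i * (Ap * Ap) = (Ap * Ap) * P i)
    (hPiBm : ∀ i, P i * (Am * Am) = (Am * Am) * P i)
    (hPPAp : ∀ i j, i ≠ j → P i * (P j * Ap - Ap * P j) = (P j * Ap - Ap * P j) * P i)
    (hPPAm : ∀ i j, i ≠ j → P i * (P j * Am - Am * P j) = (P j * Am - Am * P j) * P i)
    (Γ : R) (hΓ : Γ = (2 : ℂ)⁻¹ • ((Am * Ap - Ap * Am - 1) * Pb)) :
    ∀ i j k : Fin 3, i ≠ j → j ≠ k → i ≠ k →
      Cgen Am Ap (P i * P j) * Cgen Am Ap (P j * P k)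
        + Cgen Am Ap (P j * P k) * Cgen Am Ap (P i * P j)
      = Cgen Am Ap (P i * P k)
        + (Cgen Am Ap (P j) * Γ + Γ * Cgen Am Ap (P j))
        + (Cgen Am Ap (P i) * Cgen Am Ap (P k)
            + Cgen Am Ap (P k) * Cgen Am Ap (P i)) := by
  intro i j k hij hjk hik
  have := IsAddTorsionFree.of_isTorsionFree ℂ R
  subst hPb hΓ
  have hPpm u : Commute (P u) (Ap * Am + Am * Ap) :=
    hpm ▸ (Commute.ofNat_right (P u) 2).mul_right (hPiA0 u)
  have hsplit := isSplitting_oddPart hPcomm hPi2 hPAp hPAm hPiBp hPiBm hPpm hPPAp hPPAm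
  have key := hsplit.scaledCasimir_relation
    (sum_oddPart_eq_of_anticomm hPcomm hPi2 hsplit.commute_x hPAp)
    (sum_oddPart_eq_of_anticomm hPcomm hPi2 hsplit.commute_y hPAm) hij hjk hik
  rw [PS_univ_eq_of_ne hPcomm hij hjk hik, smul_mul_eq_smul_scaledGamma]
  simp only [Cgen_eq_smul_scaledCasimir, smul_mul_assoc, mul_smul_comm, smul_smul, ← smul_add, key]
  match_scalars <;> norm_num

theorem stmt10
    {R : Type*} [Ring R] [Algebra ℂ R] 
    (A₀ Ap Am Pb : R) (P : Fin 3 → R)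
    (hPcomm : ∀ i j : Fin 3, Commute (P i) (P j))
    (hPb : Pb = PS P hPcomm Finset.univ)
    (hPsq : Pb * Pb = 1)
    (hPA0 : Pb * A₀ = A₀ * Pb)
    (hPAp : Pb * Ap + Ap * Pb = 0)
    (hPAm : Pb * Am + Am * Pb = 0)
    (hA0p : A₀ * Ap - Ap * A₀ = Ap)
    (hA0m : A₀ * Am - Am * A₀ = -Am)
    (hpm : Ap * Am + Am * Ap = 2 * A₀)
    (hPi2 : ∀ i, P i * P i = 1)
    (hPiA0 : ∀ i, P i * A₀ = A₀ * P i)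
    (hPiBp : ∀ i, P i * (Ap * Ap) = (Ap * Ap) * P i)
    (hPiBm : ∀ i, P i * (Am * Am) = (Am * Am) * P i)
    (hPPAp : ∀ i j, i ≠ j → P i * (P j * Ap - Ap * P j) = (P j * Ap - Ap * P j) * P i)
    (hPPAm : ∀ i j, i ≠ j → P i * (P j * Am - Am * P j) = (P j * Am - Am * P j) * P i)
    (Γ : R) (hΓ : Γ = (2 : ℂ)⁻¹ • ((Am * Ap - Ap * Am - 1) * Pb)) :
    ∀ i j k : Fin 3, i ≠ j → j ≠ k → i ≠ k →
      Cgen Am Ap (P i * P j) * Cgen Am Ap (P j * P k)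
        + Cgen Am Ap (P j * P k) * Cgen Am Ap (P i * P j)
      = Cgen Am Ap (P i * P k)
        + (Cgen Am Ap (P j) * Γ + Γ * Cgen Am Ap (P j))
        + (Cgen Am Ap (P i) * Cgen Am Ap (P k)
            + Cgen Am Ap (P k) * Cgen Am Ap (P i)) :=
  stmt10_general A₀ Ap Am Pb P hPcomm hPb hPAp hPAm hpm hPi2 hPiA0 hPiBp hPiBm hPPAp hPPAm Γ hΓ
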